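/- arXiv:1001.0158 — 8 statements merged into one kernel-verified Lean document; each statement's English description precedes it below -/
import Mathlib

section
/- Let E be a join-semilattice and L a poset. A map v : E → L is maxitive if and only if for all g, g' ∈ E, v (g ⊔ g') is the least upper bound in L of the pair {v g, v g'}. -/
/-- A map `v : E → L` between posets is maxitive if for every nonempty finite subset `S`
of `E` and every `b` that is the least upper bound of `S`, `v b` is the least upper bound
of the image `v '' S`. -/
def Maxitive {E L : Type*} [Preorder E] [Preorder L] (v : E → L) : Prop :=
  ∀ S : Set E, S.Nonempty → S.Finite → ∀ b : E, IsLUB S b → IsLUB (v '' S) (v b)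

-- Both sets have the upper bounds `Ici y ∩ Ici x`.
theorem IsLUB.insert_of_isLUB_pair {L : Type*} [Preorder L] {A : Set L} {x y z : L}
    (hA : IsLUB A x) (hz : IsLUB {y, x} z) : IsLUB (insert y A) z := by
  rw [IsLUB, upperBounds_insert, upperBounds_singleton] at hz
  rwa [IsLUB, upperBounds_insert, hA.upperBounds_eq]

theorem isLUB_image_finset_sup'_of_isLUB_pair {E L : Type*} [SemilatticeSup E] [Preorder L]
    {v : E → L} (h : ∀ g g' : E, IsLUB {v g, v g'} (v (g ⊔ g'))) {t : Finset E}
    (ht : t.Nonempty) : IsLUB (v '' t) (v (t.sup' ht id)) := by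
  induction ht using Finset.Nonempty.cons_induction with
  | singleton a => simp
  | cons a t _ ht ih =>
    rw [Finset.sup'_cons (H := ht), Finset.coe_cons, Set.image_insert_eq]
    exact ih.insert_of_isLUB_pair (h a _)

/-- On a join-semilattice, a map is maxitive iff `v (g ⊔ g')` is the least upper bound of
the pair `{v g, v g'}` for all `g, g'`. -/
theorem maxitive_iff_binary {E L : Type*} [SemilatticeSup E] [PartialOrder L] (v : E → L) :
    Maxitive v ↔ ∀ g g' : E, IsLUB {v g, v g'} (v (g ⊔ g')) := by
  constructor
  · intro hv g g'
    rw [← Set.image_pair]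
    exact hv {g, g'} (Set.insert_nonempty _ _) (Set.toFinite _) _ isLUB_pair
  · rintro h S hS hfin b hb
    lift S to Finset E using hfin
    have ht : S.Nonempty := by exact_mod_cast hS
    rw [hb.unique (Finset.isLUB_sup' ht)]
    exact isLUB_image_finset_sup'_of_isLUB_pair h ht
end

section
/- Let E be a join-semilattice and R a lattice-ordered additive commutative group (an additive commutative group with a lattice order in which addition is covariant in each variable). Let v : E → R satisfy v g ≥ 0 for all g and v (g ⊔ g') = v g ⊔ v g' for all g, g' ∈ E. Then v is alternating of infinite order: for every nonempty list l = [g₁, …, gₙ] of elements of E and every g ∈ E, 0 ≤ ((-1 : ℤ)^(n+1)) • (D l) g, where D is defined recursively on lists by D [] = v and D (h :: l') = fun g => (D l') (g ⊔ h) - (D l') g (so that D l = Δ_{g₁} … Δ_{gₙ} v with Δ_h w (g) = w (g ⊔ h) - w g). -/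
/-- Iterated Choquet difference operator: `iterDiff v [] = v` and
`iterDiff v (h :: l') g = iterDiff v l' (g ⊔ h) - iterDiff v l' g`, so that
`iterDiff v [g₁, …, gₙ] = Δ_{g₁} … Δ_{gₙ} v` with `Δ_h w g = w (g ⊔ h) - w g`. -/
def iterDiff {E R : Type*} [SemilatticeSup E] [AddCommGroup R] (v : E → R) :
    List E → E → R
  | [], g => v g
  | h :: l', g => iterDiff v l' (g ⊔ h) - iterDiff v l' g

/-!
If `w` turns joins into meets, then `Δ_h w g = w g ⊓ w h - w g = -(w g - w h)⁺`, and
`g ↦ (w g - w h)⁺` again turns joins into meets, since `·⁺` distributes over `⊓` in a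
lattice-ordered group. Starting from `-v`, which turns joins into meets because `v` is maxitive,
each difference operator flips the sign, and `Δ_{g₁} … Δ_{gₙ} v = (-1)ⁿ⁺¹ • (w · - w g₁)⁺` for
such a `w` built from `g₂, …, gₙ`.
-/

section

variable {E R : Type*} [SemilatticeSup E] [Lattice R] [AddCommGroup R] [AddLeftMono R]

lemma posPart_inf (a b : R) : (a ⊓ b)⁺ = a⁺ ⊓ b⁺ :=
  @sup_inf_right R (AddCommGroup.toDistribLattice R) a b 0

def IsMinitive (w : E → R) : Prop :=
  ∀ g g', w (g ⊔ g') = w g ⊓ w g'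

lemma isMinitive_neg_of_maxitive {v : E → R} (hmax : ∀ g g', v (g ⊔ g') = v g ⊔ v g') :
    IsMinitive (-v) := fun g g' => by
  simp only [Pi.neg_apply, hmax, neg_sup]

lemma IsMinitive.posPart_sub {w : E → R} (hw : IsMinitive w) (c : R) :
    IsMinitive fun g => (w g - c)⁺ := fun g g' => by
  simp only [hw g g', inf_sub, posPart_inf]

lemma IsMinitive.iterDiff_cons {v w : E → R} (hw : IsMinitive w) {l : List E} {n : ℤ}
    (hl : iterDiff v l = n • w) (h : E) :
    iterDiff v (h :: l) = (-n) • fun g => (w g - w h)⁺ := by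
  funext g
  have hΔ : w (g ⊔ h) - w g = -(w g - w h)⁺ := by
    rw [hw, inf_eq_sub_posPart_sub, sub_sub_cancel_left]
  simp only [iterDiff, hl, Pi.smul_apply, ← smul_sub, hΔ, smul_neg, neg_smul]

lemma exists_isMinitive_iterDiff_eq {v : E → R} (hmax : ∀ g g', v (g ⊔ g') = v g ⊔ v g')
    (l : List E) : ∃ w : E → R, IsMinitive w ∧ iterDiff v l = (-1 : ℤ) ^ (l.length + 1) • w := by
  induction l with
  | nil => exact ⟨-v, isMinitive_neg_of_maxitive hmax, by funext g; simp [iterDiff]⟩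
  | cons h l ih =>
    obtain ⟨w, hw, hl⟩ := ih
    refine ⟨_, hw.posPart_sub (w h), ?_⟩
    rw [hw.iterDiff_cons hl h, List.length_cons, pow_succ _ (l.length + 1), mul_neg_one]

end

theorem maxitive_alternating_general {E R : Type*} [SemilatticeSup E] [Lattice R] [AddCommGroup R]
    [CovariantClass R R (· + ·) (· ≤ ·)]
    (v : E → R)
    (hmax : ∀ g g' : E, v (g ⊔ g') = v g ⊔ v g')
    (l : List E) (hl : l ≠ []) (g : E) :
    0 ≤ ((-1 : ℤ) ^ (l.length + 1)) • iterDiff v l g := by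
  obtain ⟨h, l, rfl⟩ := List.exists_cons_of_ne_nil hl
  obtain ⟨w, hw, hwl⟩ := exists_isMinitive_iterDiff_eq hmax l
  have hsign : (-1 : ℤ) ^ ((h :: l).length + 1) * -(-1) ^ (l.length + 1) = 1 := by
    rw [List.length_cons, pow_succ, mul_neg_one, neg_mul_neg, ← pow_add, Even.neg_one_pow ⟨_, rfl⟩]
  rw [hw.iterDiff_cons hwl h, Pi.smul_apply, smul_smul, hsign, one_smul]
  exact posPart_nonneg _

/-- Every nonnegative maxitive map from a join-semilattice into a lattice-ordered
abelian group is alternating of infinite order. -/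
theorem maxitive_alternating {E R : Type*} [SemilatticeSup E] [Lattice R] [AddCommGroup R]
    [CovariantClass R R (· + ·) (· ≤ ·)]
    (v : E → R) (hpos : ∀ g : E, 0 ≤ v g)
    (hmax : ∀ g g' : E, v (g ⊔ g') = v g ⊔ v g')
    (l : List E) (hl : l ≠ []) (g : E) :
    0 ≤ ((-1 : ℤ) ^ (l.length + 1)) • iterDiff v l g :=
  maxitive_alternating_general v hmax l hl g
end

section
/- Let E and L be posets, I : L → Set E a family such that each I t is an ideal of E, and v : E → L a map such that for every g ∈ E the set T g = {t ∈ L | g ∈ I t} is nonempty, is an upper set, is downward directed, and has v g as its greatest lower bound (IsGLB (T g) (v g)). If the family is right-continuous, i.e. I t = ⋂ {I s | s ≫ t} for every t ∈ L (where ≫ is the way-above relation in L), then v is maxitive. -/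
/-!
Right-continuity pins the ideals down as the sublevel sets of `v`: `g ∈ I t ↔ v g ≤ t`. Indeed,
if `v g ≤ t` and `s ≫ t`, then `s` is way above the infimum `v g` of the directed set of levels
containing `g`, so some such level lies below `s`, and `g ∈ I s`; intersecting over `s ≫ t` gives
`g ∈ I t`. A map whose sublevel sets are ideals is maxitive: lower sets give monotonicity, and
closure under finite suprema gives the least-upper-bound property.
-/

/-- `y` is way above `x`. -/
def WayAbove {α : Type*} [Preorder α] (y x : α) : Prop :=
  ∀ D : Set α, D.Nonempty → DirectedOn (· ≥ ·) D → ∀ d : α, IsGLB D d → d ≤ x → ∃ z ∈ D, z ≤ y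

/-- An ideal of a poset: a lower set closed under existing finite least upper bounds. -/
def IsIdeal {E : Type*} [Preorder E] (I : Set E) : Prop :=
  IsLowerSet I ∧
    ∀ S : Set E, S.Nonempty → S.Finite → S ⊆ I → ∀ b : E, IsLUB S b → b ∈ I

theorem IsUpperSet.mem_of_wayAbove {L : Type*} [Preorder L] {T : Set L} {d x s : L}
    (hU : IsUpperSet T) (hne : T.Nonempty) (hdir : DirectedOn (· ≥ ·) T) (hd : IsGLB T d)
    (hdx : d ≤ x) (hs : WayAbove s x) : s ∈ T :=
  let ⟨_, hz, hzs⟩ := hs T hne hdir d hd hdx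
  hU hzs hz

theorem mem_iff_le_of_rightContinuous {E L : Type*} [Preorder L] {I : L → Set E} {g : E} {x : L}
    (hne : {t : L | g ∈ I t}.Nonempty) (hU : IsUpperSet {t : L | g ∈ I t})
    (hdir : DirectedOn (· ≥ ·) {t : L | g ∈ I t}) (hglb : IsGLB {t : L | g ∈ I t} x)
    (hrc : ∀ t : L, ⋂ s ∈ {s : L | WayAbove s t}, I s ⊆ I t) {t : L} :
    g ∈ I t ↔ x ≤ t :=
  ⟨fun hg => hglb.1 hg, fun hxt =>
    hrc t <| Set.mem_iInter₂.2 fun _ hs => hU.mem_of_wayAbove hne hdir hglb hxt hs⟩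

theorem maxitive_of_isIdeal_preimage_Iic {E L : Type*} [Preorder E] [Preorder L] {v : E → L}
    (h : ∀ t, IsIdeal (v ⁻¹' Set.Iic t)) : Maxitive v := by
  intro S hne hfin b hb
  refine ⟨?_, fun m hm => ?_⟩
  · rintro _ ⟨g, hg, rfl⟩
    exact (h (v b)).1 (hb.1 hg) (le_refl (v b))
  · exact (h m).2 S hne hfin (fun g hg => hm ⟨g, hg, rfl⟩) b hb

/-- A map defined as the infimum over a right-continuous family of ideals is maxitive. -/
theorem maxitive_of_rightContinuous_ideals {E L : Type*} [PartialOrder E] [PartialOrder L]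
    (I : L → Set E) (hI : ∀ t : L, IsIdeal (I t)) (v : E → L)
    (hT : ∀ g : E, {t : L | g ∈ I t}.Nonempty ∧ IsUpperSet {t : L | g ∈ I t} ∧
      DirectedOn (· ≥ ·) {t : L | g ∈ I t} ∧ IsGLB {t : L | g ∈ I t} (v g))
    (hrc : ∀ t : L, I t = ⋂ s ∈ {s : L | WayAbove s t}, I s) :
    Maxitive v := by
  have hsublevel : ∀ t, I t = v ⁻¹' Set.Iic t := fun t => Set.ext fun g =>
    let ⟨hne, hU, hdir, hglb⟩ := hT g
    mem_iff_le_of_rightContinuous hne hU hdir hglb fun s => (hrc s).superset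
  exact maxitive_of_isIdeal_preimage_Iic fun t => hsublevel t ▸ hI t
end

section
/- Let E be a poset and L a dually continuous poset. A map v : E → L is maxitive if and only if there exists a family I : L → Set E such that each I t is an ideal of E and, for every g ∈ E, the set {t ∈ L | g ∈ I t} is nonempty, is an upper set, is downward directed, and has v g as its greatest lower bound (IsGLB). -/
/-- A poset is dually continuous. -/
def DuallyContinuous (α : Type*) [Preorder α] : Prop :=
  ∀ x : α, {y | WayAbove y x}.Nonempty ∧ DirectedOn (· ≥ ·) {y | WayAbove y x} ∧
    IsGLB {y | WayAbove y x} x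

/-!
A maxitive map is monotone, so the sublevel sets `v⁻¹(↓t)` are ideals, and `t ∈ ↑(v g)` exactly
when `g` lies in the sublevel set of `t`: this represents `v`. Conversely, given a representation
and `S` with least upper bound `b`, every `w ≫ u` for an upper bound `u` of `v '' S` lies in each
filtered upper set `{t | g ∈ I t}`, `g ∈ S`, since its infimum `v g` is below `u`. So `S ⊆ I w`,
hence `b ∈ I w` and `v b ≤ w`; as `u` is the infimum of the elements way above it, `v b ≤ u`.
-/

open Set

section

variable {E L : Type*} [Preorder E] [Preorder L] {v : E → L}

theorem Maxitive.monotone (hv : Maxitive v) : Monotone v := by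
  intro g g' hgg'
  have hlub : IsLUB ({g, g'} : Set E) g' :=
    ⟨by rintro x (rfl | rfl); exacts [hgg', le_rfl], fun x hx => hx (mem_insert_of_mem g rfl)⟩
  exact (hv {g, g'} (insert_nonempty g _) (toFinite _) g' hlub).1
    (mem_image_of_mem v (mem_insert g _))

theorem Maxitive.isIdeal_preimage_Iic (hv : Maxitive v) (t : L) : IsIdeal (v ⁻¹' Iic t) :=
  ⟨isLowerSet_Iic t |>.preimage hv.monotone,
    fun S hne hfin hS b hb => (hv S hne hfin b hb).2 (forall_mem_image.2 hS)⟩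

theorem WayAbove.mem_of_isGLB_le {w u a : L} {D : Set L} (hw : WayAbove w u) (hne : D.Nonempty)
    (hup : IsUpperSet D) (hdir : DirectedOn (· ≥ ·) D) (hglb : IsGLB D a) (hau : a ≤ u) :
    w ∈ D :=
  let ⟨_, hz, hzw⟩ := hw D hne hdir a hglb hau
  hup hzw hz

theorem monotone_of_isGLB_setOf_mem {I : L → Set E} (hI : ∀ t, IsLowerSet (I t))
    (hglb : ∀ g, IsGLB {t | g ∈ I t} (v g)) : Monotone v :=
  fun _ _ hgg' => (hglb _).mono (hglb _) fun t ht => hI t hgg' ht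

theorem Maxitive.of_ideal_representation (hL : DuallyContinuous L) {I : L → Set E}
    (hI : ∀ t, IsIdeal (I t))
    (hrep : ∀ g : E, {t : L | g ∈ I t}.Nonempty ∧ IsUpperSet {t : L | g ∈ I t} ∧
      DirectedOn (· ≥ ·) {t : L | g ∈ I t} ∧ IsGLB {t : L | g ∈ I t} (v g)) :
    Maxitive v := by
  have hmono := monotone_of_isGLB_setOf_mem (fun t => (hI t).1) fun g => (hrep g).2.2.2
  intro S hne hfin b hb
  refine ⟨forall_mem_image.2 fun g hg => hmono (hb.1 hg), fun u hu => ?_⟩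
  refine (hL u).2.2.2 fun w hw => (hrep b).2.2.2.1 ((hI w).2 S hne hfin ?_ b hb)
  intro g hg
  obtain ⟨hne, hup, hdir, hglb⟩ := hrep g
  exact hw.mem_of_isGLB_le hne hup hdir hglb (hu (mem_image_of_mem v hg))

end

/-- If `L` is a dually continuous poset, a map `v : E → L` is maxitive iff it is
represented by a family of ideals of `E`. -/
theorem maxitive_iff_ideal_representation {E L : Type*} [PartialOrder E] [PartialOrder L]
    (hL : DuallyContinuous L) (v : E → L) :
    Maxitive v ↔ ∃ I : L → Set E, (∀ t : L, IsIdeal (I t)) ∧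
      ∀ g : E, {t : L | g ∈ I t}.Nonempty ∧ IsUpperSet {t : L | g ∈ I t} ∧
        DirectedOn (· ≥ ·) {t : L | g ∈ I t} ∧ IsGLB {t : L | g ∈ I t} (v g) := by
  constructor
  · intro hv
    exact ⟨fun t => v ⁻¹' Iic t, hv.isIdeal_preimage_Iic,
      fun g => ⟨nonempty_Ici, isUpperSet_Ici (v g), directedOn_ge_Ici (v g), isGLB_Ici⟩⟩
  · rintro ⟨I, hI, hrep⟩
    exact .of_ideal_representation hL hI hrep
end

section
/- Let E be a poset, L a dually continuous poset, I : L → Set E a family of ideals of E, and v : E → L such that for every g ∈ E the set {t ∈ L | g ∈ I t} is nonempty, is an upper set, is downward directed, and has v g as its greatest lower bound (IsGLB). Then the family is right-continuous (I t = ⋂ {I s | s ≫ t} for all t ∈ L) if and only if I t = {g ∈ E | v g ≤ t} for all t ∈ L. -/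
/-! For each `g`, dual continuity turns `v g ≤ t` into "`g ∈ I s` for every `s ≫ t`", since
`{t | g ∈ I t}` is a filtered upper set with infimum `v g`; so both sides of the equivalence
say the same thing. -/

theorem WayAbove.mem_of_isGLB_le_s6 {α : Type*} [Preorder α] {s t : α} (hst : WayAbove s t)
    {D : Set α} (hD : IsUpperSet D) (hne : D.Nonempty) (hdir : DirectedOn (· ≥ ·) D) {d : α}
    (hd : IsGLB D d) (hdt : d ≤ t) : s ∈ D := by
  obtain ⟨z, hzD, hzs⟩ := hst D hne hdir d hd hdt
  exact hD hzs hzD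

theorem DuallyContinuous.isGLB_le_iff_forall_wayAbove_mem {α : Type*} [Preorder α]
    (hα : DuallyContinuous α) {D : Set α} (hD : IsUpperSet D) (hne : D.Nonempty)
    (hdir : DirectedOn (· ≥ ·) D) {d : α} (hd : IsGLB D d) (t : α) :
    d ≤ t ↔ ∀ s, WayAbove s t → s ∈ D :=
  ⟨fun hdt _ hst => hst.mem_of_isGLB_le_s6 hD hne hdir hd hdt,
    fun h => (hα t).2.2.2 fun _ hst => hd.1 (h _ hst)⟩

theorem rightContinuous_iff_sublevel_general {E L : Type*} [PartialOrder E] [PartialOrder L]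
    (hL : DuallyContinuous L) (I : L → Set E) (v : E → L)
    (hT : ∀ g : E, {t : L | g ∈ I t}.Nonempty ∧ IsUpperSet {t : L | g ∈ I t} ∧
      DirectedOn (· ≥ ·) {t : L | g ∈ I t} ∧ IsGLB {t : L | g ∈ I t} (v g)) :
    (∀ t : L, I t = ⋂ s ∈ {s : L | WayAbove s t}, I s) ↔
      (∀ t : L, I t = {g : E | v g ≤ t}) := by
  have sublevel_iff (g : E) (t : L) : v g ≤ t ↔ ∀ s, WayAbove s t → g ∈ I s :=
    hL.isGLB_le_iff_forall_wayAbove_mem (hT g).2.1 (hT g).1 (hT g).2.2.1 (hT g).2.2.2 t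
  simp only [Set.ext_iff, Set.mem_iInter, Set.mem_ofPred_eq, sublevel_iff]

/-- A representing family of ideals is right-continuous iff it is the family of
sublevel sets of the represented map. -/
theorem rightContinuous_iff_sublevel {E L : Type*} [PartialOrder E] [PartialOrder L]
    (hL : DuallyContinuous L) (I : L → Set E) (hI : ∀ t : L, IsIdeal (I t)) (v : E → L)
    (hT : ∀ g : E, {t : L | g ∈ I t}.Nonempty ∧ IsUpperSet {t : L | g ∈ I t} ∧
      DirectedOn (· ≥ ·) {t : L | g ∈ I t} ∧ IsGLB {t : L | g ∈ I t} (v g)) :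
    (∀ t : L, I t = ⋂ s ∈ {s : L | WayAbove s t}, I s) ↔
      (∀ t : L, I t = {g : E | v g ≤ t}) :=
  rightContinuous_iff_sublevel_general hL I v hT
end

section
/- Let Ē be a complete lattice and E ⊆ Ē a nonempty subset closed under the binary join of Ē. Let L be a poset that is dually continuous and in which every nonempty downward-directed subset has a greatest lower bound. Let v : E → L be maxitive. Define E* = {a ∈ Ē | the set {g ∈ E | a ≤ g} is nonempty and downward directed} (so E ⊆ E*). Then there exists a map v* : E* → L such that: (i) for every a ∈ E*, IsGLB {v g | g ∈ E, a ≤ g} (v* a); (ii) v* is maxitive on E*; (iii) v* g = v g for every g ∈ E; and (iv) every maxitive map w : E* → L with w g = v g for all g ∈ E satisfies w a ≤ v* a for all a ∈ E*. -/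
/-- A map `v` is maxitive on the subset `E` of the complete lattice `Ē` if, for every
nonempty finite `S ⊆ E` with `sSup S ∈ E`, `v (sSup S)` is the least upper bound of
`v '' S`. -/
def MaxitiveOn {Ebar L : Type*} [CompleteLattice Ebar] [Preorder L]
    (E : Set Ebar) (v : Ebar → L) : Prop :=
  ∀ S : Set Ebar, S ⊆ E → S.Nonempty → S.Finite → sSup S ∈ E → IsLUB (v '' S) (v (sSup S))

/-! `v* a` is the infimum of `v` over the elements of `E` above `a`. Maxitivity of `v*` on `E*`
is the only real point: if `u` bounds `v* a` for `a ∈ S`, then every `y ≫ u` lies above some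
`v g_a` with `a ≤ g_a ∈ E` (this is what `y ≫ v* a` means for the directed family defining
`v* a`), so `v* (sSup S) ≤ v (⨆ g_a) ≤ y` by maxitivity of `v` on `E`; dual continuity turns
`∀ y ≫ u, v* (sSup S) ≤ y` into `v* (sSup S) ≤ u`. -/

theorem WayAbove.of_le {L : Type*} [Preorder L] {x u y : L} (hy : WayAbove y u) (hxu : x ≤ u) :
    WayAbove y x :=
  fun D hD hDdir d hd hdx => hy D hD hDdir d hd (hdx.trans hxu)

theorem DuallyContinuous.le_of_forall_wayAbove {L : Type*} [Preorder L] (hL : DuallyContinuous L)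
    {x u : L} (h : ∀ y, WayAbove y u → x ≤ y) : x ≤ u :=
  (hL u).2.2.2 h

theorem MaxitiveOn.monotoneOn {Ebar L : Type*} [CompleteLattice Ebar] [Preorder L] {E : Set Ebar}
    {v : Ebar → L} (hv : MaxitiveOn E v) : MonotoneOn v E := by
  intro a ha b hb hab
  have hpair : sSup {a, b} = b := by rw [sSup_pair, sup_eq_right.mpr hab]
  have hlub := hv {a, b} (Set.pair_subset ha hb) (Set.insert_nonempty a {b})
    (Set.toFinite _) (by rw [hpair]; exact hb)
  rw [hpair] at hlub
  exact hlub.1 (Set.mem_image_of_mem v (Set.mem_insert a {b}))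

section MaximalExtension

variable {Ebar L : Type*} [CompleteLattice Ebar] {E : Set Ebar}

/-- The domain `E*` of the maximal extension. -/
def extensionDomain (E : Set Ebar) : Set Ebar :=
  {a | {g ∈ E | a ≤ g}.Nonempty ∧ DirectedOn (· ≥ ·) {g ∈ E | a ≤ g}}

theorem subset_extensionDomain : E ⊆ extensionDomain E :=
  fun g hg => ⟨⟨g, hg, le_rfl⟩, fun _ hg₁ _ hg₂ => ⟨g, ⟨hg, le_rfl⟩, hg₁.2, hg₂.2⟩⟩

theorem directedOn_image_of_mem_extensionDomain [Preorder L] {v : Ebar → L}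
    (hv : MonotoneOn v E) {a : Ebar} (ha : a ∈ extensionDomain E) :
    DirectedOn (· ≥ ·) (v '' {g ∈ E | a ≤ g}) :=
  directedOn_image.mpr <| ha.2.mono' fun _ hg₁ _ hg₂ hle => hv hg₂.1 hg₁.1 hle

/-- The map `v*`; its values outside `E*` are junk. -/
noncomputable def maximalExtension [Preorder L] (E : Set Ebar) (v : Ebar → L) (a : Ebar) : L :=
  haveI : Nonempty L := ⟨v a⟩
  Classical.epsilon (IsGLB (v '' {g ∈ E | a ≤ g}))

variable [PartialOrder L] {v : Ebar → L}

theorem isGLB_maximalExtension {a : Ebar} (h : ∃ d, IsGLB (v '' {g ∈ E | a ≤ g}) d) :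
    IsGLB (v '' {g ∈ E | a ≤ g}) (maximalExtension E v a) :=
  haveI : Nonempty L := ⟨v a⟩
  Classical.epsilon_spec h

theorem isGLB_maximalExtension_of_mem_extensionDomain
    (hLglb : ∀ D : Set L, D.Nonempty → DirectedOn (· ≥ ·) D → ∃ d : L, IsGLB D d)
    (hv : MonotoneOn v E) {a : Ebar} (ha : a ∈ extensionDomain E) :
    IsGLB (v '' {g ∈ E | a ≤ g}) (maximalExtension E v a) :=
  isGLB_maximalExtension <| hLglb _ (ha.1.image v) (directedOn_image_of_mem_extensionDomain hv ha)

theorem maximalExtension_eq_of_mem (hv : MonotoneOn v E) {g : Ebar} (hg : g ∈ E) :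
    maximalExtension E v g = v g := by
  have hleast : IsLeast (v '' {g' ∈ E | g ≤ g'}) (v g) :=
    ⟨⟨g, ⟨hg, le_rfl⟩, rfl⟩, by rintro _ ⟨g', ⟨hg', hgg'⟩, rfl⟩; exact hv hg hg' hgg'⟩
  exact (isGLB_maximalExtension ⟨_, hleast.isGLB⟩).unique hleast.isGLB

theorem maximalExtension_le_of_mem {a g : Ebar}
    (hglb : IsGLB (v '' {g ∈ E | a ≤ g}) (maximalExtension E v a)) (hg : g ∈ E) (hag : a ≤ g) :
    maximalExtension E v a ≤ v g :=
  hglb.1 ⟨g, ⟨hg, hag⟩, rfl⟩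

theorem maximalExtension_mono {a b : Ebar}
    (ha : IsGLB (v '' {g ∈ E | a ≤ g}) (maximalExtension E v a))
    (hb : IsGLB (v '' {g ∈ E | b ≤ g}) (maximalExtension E v b)) (hab : a ≤ b) :
    maximalExtension E v a ≤ maximalExtension E v b :=
  hb.2 <| by
    rintro _ ⟨g, ⟨hg, hbg⟩, rfl⟩
    exact maximalExtension_le_of_mem ha hg (hab.trans hbg)

theorem exists_le_of_wayAbove_maximalExtension (hv : MonotoneOn v E) {a : Ebar}
    (ha : a ∈ extensionDomain E) (hglb : IsGLB (v '' {g ∈ E | a ≤ g}) (maximalExtension E v a))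
    {y : L} (hy : WayAbove y (maximalExtension E v a)) : ∃ g ∈ E, a ≤ g ∧ v g ≤ y := by
  obtain ⟨_, ⟨g, ⟨hg, hag⟩, rfl⟩, hgy⟩ :=
    hy _ (ha.1.image v) (directedOn_image_of_mem_extensionDomain hv ha) _ hglb le_rfl
  exact ⟨g, hg, hag, hgy⟩

theorem maxitiveOn_maximalExtension (hL : DuallyContinuous L)
    (hLglb : ∀ D : Set L, D.Nonempty → DirectedOn (· ≥ ·) D → ∃ d : L, IsGLB D d)
    (hE : SupClosed E) (hv : MaxitiveOn E v) :
    MaxitiveOn (extensionDomain E) (maximalExtension E v) := by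
  have hglb : ∀ {a}, a ∈ extensionDomain E →
      IsGLB (v '' {g ∈ E | a ≤ g}) (maximalExtension E v a) :=
    isGLB_maximalExtension_of_mem_extensionDomain hLglb hv.monotoneOn
  intro S hS hne hfin hsup
  refine ⟨?_, fun u hu => hL.le_of_forall_wayAbove fun y hy => ?_⟩
  · rintro _ ⟨a, haS, rfl⟩
    exact maximalExtension_mono (hglb (hS haS)) (hglb hsup) (le_sSup haS)
  · have hcover : ∀ a ∈ S, ∃ g ∈ E, a ≤ g ∧ v g ≤ y := fun a haS =>
      exists_le_of_wayAbove_maximalExtension hv.monotoneOn (hS haS) (hglb (hS haS))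
        (hy.of_le (hu ⟨a, haS, rfl⟩))
    choose! f hfE hf hfy using hcover
    have hT : f '' S ⊆ E := Set.image_subset_iff.mpr hfE
    have hTsup : sSup (f '' S) ∈ E := hE.sSup_mem_of_nonempty (hfin.image f) (hne.image f) hT
    calc maximalExtension E v (sSup S)
        ≤ v (sSup (f '' S)) := maximalExtension_le_of_mem (hglb hsup) hTsup
          (sSup_le fun a ha => (hf a ha).trans (le_sSup ⟨a, ha, rfl⟩))
      _ ≤ y := (hv _ hT (hne.image f) (hfin.image f) hTsup).2 <| by
          rintro _ ⟨_, ⟨a, haS, rfl⟩, rfl⟩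
          exact hfy a haS

theorem le_maximalExtension_of_maxitiveOn {w : Ebar → L} (hw : MaxitiveOn (extensionDomain E) w)
    (hwv : ∀ g ∈ E, w g = v g) {a : Ebar} (ha : a ∈ extensionDomain E)
    (hglb : IsGLB (v '' {g ∈ E | a ≤ g}) (maximalExtension E v a)) :
    w a ≤ maximalExtension E v a :=
  hglb.2 <| by
    rintro _ ⟨g, ⟨hg, hag⟩, rfl⟩
    exact hwv g hg ▸ hw.monotoneOn ha (subset_extensionDomain hg) hag

end MaximalExtension

theorem exists_maximal_maxitive_extension_general {Ebar L : Type*} [CompleteLattice Ebar]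
    [PartialOrder L] (hL : DuallyContinuous L)
    (hLglb : ∀ D : Set L, D.Nonempty → DirectedOn (· ≥ ·) D → ∃ d : L, IsGLB D d)
    (E : Set Ebar) (hEjoin : ∀ g ∈ E, ∀ g' ∈ E, g ⊔ g' ∈ E)
    (v : Ebar → L) (hv : MaxitiveOn E v) :
    ∃ vstar : Ebar → L,
      (∀ a ∈ {a : Ebar | {g ∈ E | a ≤ g}.Nonempty ∧ DirectedOn (· ≥ ·) {g ∈ E | a ≤ g}},
        IsGLB {x : L | ∃ g ∈ E, a ≤ g ∧ x = v g} (vstar a)) ∧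
      MaxitiveOn {a : Ebar | {g ∈ E | a ≤ g}.Nonempty ∧
        DirectedOn (· ≥ ·) {g ∈ E | a ≤ g}} vstar ∧
      (∀ g ∈ E, vstar g = v g) ∧
      (∀ w : Ebar → L,
        MaxitiveOn {a : Ebar | {g ∈ E | a ≤ g}.Nonempty ∧
          DirectedOn (· ≥ ·) {g ∈ E | a ≤ g}} w →
        (∀ g ∈ E, w g = v g) →
        ∀ a ∈ {a : Ebar | {g ∈ E | a ≤ g}.Nonempty ∧ DirectedOn (· ≥ ·) {g ∈ E | a ≤ g}},
          w a ≤ vstar a) := by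
  have hglb : ∀ {a}, a ∈ extensionDomain E →
      IsGLB (v '' {g ∈ E | a ≤ g}) (maximalExtension E v a) :=
    isGLB_maximalExtension_of_mem_extensionDomain hLglb hv.monotoneOn
  have himage : ∀ a, {x : L | ∃ g ∈ E, a ≤ g ∧ x = v g} = v '' {g ∈ E | a ≤ g} := fun a => by
    ext; simp [eq_comm, and_assoc]
  refine ⟨maximalExtension E v, fun a ha => himage a ▸ hglb ha,
    maxitiveOn_maximalExtension hL hLglb (fun _ hg _ hg' => hEjoin _ hg _ hg') hv,
    fun g hg => maximalExtension_eq_of_mem hv.monotoneOn hg,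
    fun w hw hwv a ha => le_maximalExtension_of_maxitiveOn hw hwv ha (hglb ha)⟩

/-- Maximal extension `v*` of a maxitive map `v` to the set
`E* = {a | {g ∈ E | a ≤ g} is nonempty and downward directed}`. -/
theorem exists_maximal_maxitive_extension {Ebar L : Type*} [CompleteLattice Ebar]
    [PartialOrder L] (hL : DuallyContinuous L)
    (hLglb : ∀ D : Set L, D.Nonempty → DirectedOn (· ≥ ·) D → ∃ d : L, IsGLB D d)
    (E : Set Ebar) (hE : E.Nonempty) (hEjoin : ∀ g ∈ E, ∀ g' ∈ E, g ⊔ g' ∈ E)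
    (v : Ebar → L) (hv : MaxitiveOn E v) :
    ∃ vstar : Ebar → L,
      (∀ a ∈ {a : Ebar | {g ∈ E | a ≤ g}.Nonempty ∧ DirectedOn (· ≥ ·) {g ∈ E | a ≤ g}},
        IsGLB {x : L | ∃ g ∈ E, a ≤ g ∧ x = v g} (vstar a)) ∧
      MaxitiveOn {a : Ebar | {g ∈ E | a ≤ g}.Nonempty ∧
        DirectedOn (· ≥ ·) {g ∈ E | a ≤ g}} vstar ∧
      (∀ g ∈ E, vstar g = v g) ∧
      (∀ w : Ebar → L,
        MaxitiveOn {a : Ebar | {g ∈ E | a ≤ g}.Nonempty ∧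
          DirectedOn (· ≥ ·) {g ∈ E | a ≤ g}} w →
        (∀ g ∈ E, w g = v g) →
        ∀ a ∈ {a : Ebar | {g ∈ E | a ≤ g}.Nonempty ∧ DirectedOn (· ≥ ·) {g ∈ E | a ≤ g}},
          w a ≤ vstar a) :=
  exists_maximal_maxitive_extension_general hL hLglb E hEjoin v hv
end

section
/- Let Ē be a complete lattice, E ⊆ Ē a subset, L a poset, and v : E → L. If v is residuated on Ē/E, then v is completely maxitive: for every nonempty subset S ⊆ E with sSup S ∈ E (supremum in Ē), v (sSup S) is the least upper bound in L of the image v '' S. -/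
/-- `v` is residuated on `Ē/E`. -/
def ResiduatedOn {Ebar L : Type*} [CompleteLattice Ebar] [Preorder L]
    (E : Set Ebar) (v : Ebar → L) : Prop :=
  ∀ t : L, ∃ a : Ebar, {g ∈ E | v g ≤ t} = {g ∈ E | g ≤ a}

/-- `v` is completely maxitive on `E ⊆ Ē`: for every nonempty `S ⊆ E` with `sSup S ∈ E`,
`v (sSup S)` is the least upper bound of `v '' S`. -/
def CompletelyMaxitiveOn {Ebar L : Type*} [CompleteLattice Ebar] [Preorder L]
    (E : Set Ebar) (v : Ebar → L) : Prop :=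
  ∀ S : Set Ebar, S ⊆ E → S.Nonempty → sSup S ∈ E → IsLUB (v '' S) (v (sSup S))

/-!
A residual `a` of `t` satisfies `v g ≤ t ↔ g ≤ a` on `E`, a Galois connection restricted to `E`.
Taking `t = v g'` shows that `v` is monotone on `E`, so `v (sSup S)` bounds `v '' S`; and for
any upper bound `t` of `v '' S` its residual bounds `S`, hence `sSup S`, whence `v (sSup S) ≤ t`.
-/

namespace ResiduatedOn

variable {Ebar L : Type*} [CompleteLattice Ebar] [Preorder L] {E : Set Ebar} {v : Ebar → L}

theorem exists_le_iff (h : ResiduatedOn E v) (t : L) :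
    ∃ a : Ebar, ∀ g ∈ E, v g ≤ t ↔ g ≤ a := by
  obtain ⟨a, ha⟩ := h t
  refine ⟨a, fun g hg => ?_⟩
  simpa [hg] using Set.ext_iff.mp ha g

theorem monotoneOn (h : ResiduatedOn E v) : MonotoneOn v E := by
  intro g hg g' hg' hle
  obtain ⟨a, ha⟩ := h.exists_le_iff (v g')
  exact (ha g hg).mpr (hle.trans ((ha g' hg').mp le_rfl))

theorem map_sSup_le {S : Set Ebar} (h : ResiduatedOn E v) (hSE : S ⊆ E) (hsup : sSup S ∈ E)
    {t : L} (ht : t ∈ upperBounds (v '' S)) : v (sSup S) ≤ t := by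
  obtain ⟨a, ha⟩ := h.exists_le_iff t
  have hSa : sSup S ≤ a := sSup_le fun g hg => (ha g (hSE hg)).mp (ht ⟨g, hg, rfl⟩)
  exact (ha _ hsup).mpr hSa

end ResiduatedOn

/-- Every residuated map is completely maxitive. -/
theorem completelyMaxitive_of_residuated {Ebar L : Type*} [CompleteLattice Ebar]
    [PartialOrder L] (E : Set Ebar) (v : Ebar → L) (h : ResiduatedOn E v) :
    CompletelyMaxitiveOn E v := by
  intro S hSE _ hsup
  refine ⟨?_, fun t ht => h.map_sSup_le hSE hsup ht⟩
  rintro _ ⟨g, hg, rfl⟩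
  exact h.monotoneOn (hSE hg) hsup (le_sSup hg)
end

section
/- Let L be a complete lattice that is dually continuous and satisfies the finite distributive law x ⊓ (y ⊔ z) = (x ⊓ y) ⊔ (x ⊓ z). Then L is a co-Heyting algebra (dual frame): for all r, s ∈ L there exists an element e ∈ L (denoted r ← s) such that for all t ∈ L, s ≤ r ⊔ t ↔ e ≤ t; consequently, for every x ∈ L and every set S ⊆ L, x ⊔ sInf S = ⨅ (y ∈ S), (x ⊔ y). -/
/-! Dual continuity lets `x ⊔ ·` commute with codirected infima; finite distributivity then
extends this to arbitrary infima, since every infimum is the codirected infimum of the finite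
infima. This is the coframe law, and a coframe is a co-Heyting algebra with
`r ← s = s \ r`. -/

namespace DuallyContinuous

variable {L : Type*} [CompleteLattice L]

/-- Every `w ≫ x ⊔ sInf D` lies above some `x ⊔ d` with `d ∈ D`, and these `w` have infimum
`x ⊔ sInf D`. -/
theorem sup_sInf_eq_of_codirectedOn (hL : DuallyContinuous L) (x : L) {D : Set L}
    (hD : DirectedOn (· ≥ ·) D) : x ⊔ sInf D = ⨅ d ∈ D, x ⊔ d := by
  refine le_antisymm (le_iInf₂ fun d hd => sup_le_sup_left (sInf_le hd) x) ?_
  rcases D.eq_empty_or_nonempty with rfl | hne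
  · simp
  refine (hL (x ⊔ sInf D)).2.2.2 fun w hw => ?_
  obtain ⟨d, hd, hdw⟩ := hw D hne hD (sInf D) (isGLB_sInf D) le_sup_right
  have hxw : x ≤ w := le_sup_left.trans ((hL (x ⊔ sInf D)).2.2.1 hw)
  exact (iInf₂_le d hd).trans (sup_le hxw hdw)

theorem sup_sInf_eq (hL : DuallyContinuous L)
    (hdist : ∀ x y z : L, x ⊓ (y ⊔ z) = (x ⊓ y) ⊔ (x ⊓ z)) (x : L) (S : Set L) :
    x ⊔ sInf S = ⨅ y ∈ S, x ⊔ y := by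
  let _ : DistribLattice L := .ofInfSupLe fun a b c => (hdist a b c).le
  refine le_antisymm (le_iInf₂ fun y hy => sup_le_sup_left (sInf_le hy) x) ?_
  have h_infClosure : infClosure S ⊆ {d | ⨅ y ∈ S, x ⊔ y ≤ x ⊔ d} :=
    infClosure_min (fun y hy => iInf₂_le y hy) fun a ha b hb => by
      simpa only [Set.mem_ofPred_eq, sup_inf_left] using le_inf ha hb
  calc ⨅ y ∈ S, x ⊔ y ≤ ⨅ d ∈ infClosure S, x ⊔ d := le_iInf₂ fun d hd => h_infClosure hd
    _ = x ⊔ sInf (infClosure S) :=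
        (hL.sup_sInf_eq_of_codirectedOn x infClosed_infClosure.codirectedOn).symm
    _ = x ⊔ sInf S := by rw [(isGLB_infClosure.2 (isGLB_sInf S)).sInf_eq]

end DuallyContinuous

/-- A distributive, dually continuous complete lattice is a co-Heyting algebra (a dual
frame): a co-implication `r ← s` exists, and binary joins distribute over arbitrary
infima. -/
theorem coHeyting_of_distributive_duallyContinuous {L : Type*} [CompleteLattice L]
    (hL : DuallyContinuous L)
    (hdist : ∀ x y z : L, x ⊓ (y ⊔ z) = (x ⊓ y) ⊔ (x ⊓ z)) :
    (∀ r s : L, ∃ e : L, ∀ t : L, s ≤ r ⊔ t ↔ e ≤ t) ∧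
    (∀ (x : L) (S : Set L), x ⊔ sInf S = ⨅ y ∈ S, (x ⊔ y)) := by
  have h_coframe := hL.sup_sInf_eq hdist
  let _ : Order.Coframe L := .ofMinimalAxioms ⟨fun x S => (h_coframe x S).ge⟩
  exact ⟨fun r s => ⟨s \ r, fun _ => sdiff_le_iff.symm⟩, h_coframe⟩
end
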